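/- Let m, k be integers with m ≥ 5 and 2 ≤ k ≤ ⌊(m-1)/2⌋, let S be a nonempty subset of {1,...,k}, and let f_{(m,k)} be the associated function on 𝔽_3^m. Then the ternary linear code C_{f_{(m,k)}} is minimal: for every nonzero codeword c of C_{f_{(m,k)}} and every codeword c' of C_{f_{(m,k)}}, if supp(c') ⊆ supp(c) then c' = α·c for some α ∈ 𝔽_3. -/
import Mathlib


open Finset

/-- The function `f_{(m,k)} : 𝔽_3^m → 𝔽_3` attached to a subset `S ⊆ {1,…,k}`:
`-1` if `wt(x) ∈ S`, `1` if `wt(x) ∈ {1,…,k} \ S`, `0` otherwise. -/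
def fmk {m : ℕ} (k : ℕ) (S : Finset ℕ) (x : Fin m → ZMod 3) : ZMod 3 :=
  if hammingNorm x ∈ S then -1
  else if hammingNorm x ∈ Finset.Icc 1 k then 1
  else 0

private lemma zmod3_cramer : ∀ p q r t s s' : ZMod 3, p*t - q*r ≠ 0 →
    ∃ a b : ZMod 3, p*a + q*b + s = 0 ∧ r*a + t*b + s' = 1 := by decide

private lemma zmod3_key : ∀ p r : ZMod 3, p ≠ 0 → ∃ β : ZMod 3,
    ∀ q t : ZMod 3, p * t = q * r → t = β * q := by decide

private lemma zmod3_mulz : ∀ w w' : ZMod 3, w ≠ 0 → ∃ α : ZMod 3,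
    ∀ t : ZMod 3, w' * t + 0 = α * (w * t + 0) := by decide

private lemma zmod3_ex1 : ∀ p q s : ZMod 3, p ≠ 0 → ∃ a : ZMod 3,
    p * a + q * 1 + s ≠ 0 := by decide

private lemma zmod3_ex2 : ∀ p q : ZMod 3, p ≠ 0 → q ≠ 0 → ∃ b : ZMod 3,
    b ≠ 0 ∧ p * 1 + q * b = 0 := by decide

private lemma zmod3_ex3 : ∀ u p t : ZMod 3, u ≠ 0 → p ≠ 0 → t ≠ 0 → ∃ a : ZMod 3,
    a ≠ 0 ∧ u * t + p * a = 0 := by decide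

private lemma sum_if_two {m : ℕ} (w : Fin m → ZMod 3) {i j : Fin m} (hij : i ≠ j)
    (a b : ZMod 3) :
    ∑ l, w l * (if l = i then a else if l = j then b else 1)
      = w i * a + w j * b + ∑ l ∈ (univ.erase i).erase j, w l := by
  rw [← Finset.add_sum_erase _ _ (Finset.mem_univ i)]
  rw [← Finset.add_sum_erase _ _ (Finset.mem_erase.2 ⟨hij.symm, Finset.mem_univ j⟩)]
  rw [if_pos rfl, if_neg hij.symm, if_pos rfl]
  rw [Finset.sum_congr rfl (fun l hl => ?_), add_assoc]
  rw [Finset.mem_erase, Finset.mem_erase] at hl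
  rw [if_neg hl.2.1, if_neg hl.1, mul_one]

private lemma big_norm {m : ℕ} (i j : Fin m) (a b : ZMod 3) :
    m - 2 ≤ hammingNorm (fun l => if l = i then a else if l = j then b else 1) := by
  have hsub : (univ \ {i, j} : Finset (Fin m)) ⊆
      ({l | (if l = i then a else if l = j then b else 1) ≠ 0} : Finset (Fin m)) := by
    intro l hl
    simp only [Finset.mem_sdiff, Finset.mem_insert, Finset.mem_singleton, not_or] at hl
    simp only [Finset.mem_filter, Finset.mem_univ, true_and]
    rw [if_neg hl.2.1, if_neg hl.2.2]
    exact one_ne_zero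
  have hc := Finset.card_le_card hsub
  have h2 : ({i, j} : Finset (Fin m)).card ≤ 2 := by
    apply le_trans (Finset.card_insert_le _ _); simp
  rw [Finset.card_sdiff_of_subset (Finset.subset_univ _), Finset.card_univ, Fintype.card_fin] at hc
  unfold hammingNorm
  beta_reduce
  omega

private lemma sum_pts {m : ℕ} (w : Fin m → ZMod 3) {i j : Fin m} (hij : i ≠ j)
    (a b : ZMod 3) :
    ∑ l, w l * (if l = i then a else if l = j then b else 0) = w i * a + w j * b := by
  rw [← Finset.add_sum_erase _ _ (Finset.mem_univ i)]
  rw [← Finset.add_sum_erase _ _ (Finset.mem_erase.2 ⟨hij.symm, Finset.mem_univ j⟩)]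
  rw [if_pos rfl, if_neg hij.symm, if_pos rfl]
  rw [Finset.sum_eq_zero (fun l hl => ?_), add_zero]
  rw [Finset.mem_erase, Finset.mem_erase] at hl
  rw [if_neg hl.2.1, if_neg hl.1, mul_zero]

private lemma norm_two_pt {m : ℕ} {i j : Fin m} (hij : i ≠ j) {a b : ZMod 3}
    (ha : a ≠ 0) (hb : b ≠ 0) :
    hammingNorm (fun l => if l = i then a else if l = j then b else 0) = 2 := by
  unfold hammingNorm
  beta_reduce
  have : (filter (fun l => (if l = i then a else if l = j then b else 0) ≠ 0) univ)
      = {i, j} := by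
    ext l
    simp only [Finset.mem_filter, Finset.mem_univ, true_and, Finset.mem_insert,
      Finset.mem_singleton]
    by_cases h1 : l = i
    · simp [h1, ha]
    · by_cases h2 : l = j
      · simp [h1, h2, hb, hij.symm]
      · simp [h1, h2]
  rw [this, Finset.card_insert_of_notMem (by simpa using hij), Finset.card_singleton]

private lemma norm_one_pt {m : ℕ} {i : Fin m} {a : ZMod 3} (ha : a ≠ 0) :
    hammingNorm (fun l => if l = i then a else 0) = 1 := by
  unfold hammingNorm
  beta_reduce
  have : (filter (fun l => (if l = i then a else 0) ≠ 0) univ) = {i} := by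
    ext l
    simp only [Finset.mem_filter, Finset.mem_univ, true_and, Finset.mem_singleton]
    by_cases h1 : l = i
    · simp [h1, ha]
    · simp [h1]
  rw [this, Finset.card_singleton]

private lemma sum_one_pt {m : ℕ} (w : Fin m → ZMod 3) (i : Fin m) (a : ZMod 3) :
    ∑ l, w l * (if l = i then a else 0) = w i * a := by
  rw [Finset.sum_eq_single i (fun l _ hl => by rw [if_neg hl, mul_zero])
    (fun h => absurd (Finset.mem_univ i) h), if_pos rfl]

private lemma fmk_eq_zero {m k : ℕ} {S : Finset ℕ} (hSsub : S ⊆ Finset.Icc 1 k)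
    {x : Fin m → ZMod 3} (hx : k < hammingNorm x) : fmk k S x = 0 := by
  unfold fmk
  rw [if_neg (fun h => by have := (Finset.mem_Icc.1 (hSsub h)).2; omega),
    if_neg (fun h => by have := (Finset.mem_Icc.1 h).2; omega)]

private lemma fmk_ne_zero {m k : ℕ} {S : Finset ℕ} {x : Fin m → ZMod 3}
    (hx : hammingNorm x ∈ Finset.Icc 1 k) : fmk k S x ≠ 0 := by
  unfold fmk
  by_cases hS : hammingNorm x ∈ S
  · rw [if_pos hS]; decide
  · rw [if_neg hS, if_pos hx]; decide

/-- For `m ≥ 5`, `2 ≤ k ≤ ⌊(m-1)/2⌋` and `∅ ≠ S ⊆ {1,…,k}`, the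
ternary code `C_{f_{(m,k)}}` is minimal: if the support of the codeword `c_{u',v'}`
is contained in the support of the nonzero codeword `c_{u,v}`, then
`c_{u',v'} = α·c_{u,v}` for some `α ∈ 𝔽_3`. -/
theorem stmt_12 (m k : ℕ) (hm : 5 ≤ m) (hk2 : 2 ≤ k) (hk : k ≤ (m - 1) / 2)
    (S : Finset ℕ) (hS : S.Nonempty) (hSsub : S ⊆ Finset.Icc 1 k) :
    ∀ (u : ZMod 3) (v : Fin m → ZMod 3) (u' : ZMod 3) (v' : Fin m → ZMod 3),
      (∃ x : Fin m → ZMod 3, x ≠ 0 ∧ u * fmk k S x + ∑ j, v j * x j ≠ 0) →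
      (∀ x : Fin m → ZMod 3, x ≠ 0 →
        u' * fmk k S x + ∑ j, v' j * x j ≠ 0 → u * fmk k S x + ∑ j, v j * x j ≠ 0) →
      ∃ α : ZMod 3, ∀ x : Fin m → ZMod 3, x ≠ 0 →
        u' * fmk k S x + ∑ j, v' j * x j = α * (u * fmk k S x + ∑ j, v j * x j) := by
  intro u v u' v' H1 H2
  have H2' : ∀ x : Fin m → ZMod 3, x ≠ 0 →
      u * fmk k S x + ∑ j, v j * x j = 0 → u' * fmk k S x + ∑ j, v' j * x j = 0 := by
    intro x hx h0
    by_contra hne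
    exact H2 x hx hne h0
  have hk' : k < m - 2 := by omega
  -- facts about big weight vectors
  have hbig : ∀ (i j : Fin m), i ≠ j → ∀ a b : ZMod 3,
      (fun l => if l = i then a else if l = j then b else 1) ≠ 0 ∧
      fmk k S (fun l => if l = i then a else if l = j then b else 1) = 0 := by
    intro i j hij a b
    have hn := big_norm i j a b
    constructor
    · intro h
      rw [h, hammingNorm_zero] at hn
      omega
    · exact fmk_eq_zero hSsub (by omega)
  by_cases hv : ∀ l, v l = 0
  · -- v = 0; first show v' = 0
    have hv' : ∀ l, v' l = 0 := by
      intro i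
      by_contra hvi
      obtain ⟨j, hj⟩ : ∃ j : Fin m, j ≠ i :=
        Fintype.exists_ne_of_one_lt_card (by simp; omega) i
      obtain ⟨a, ha⟩ := zmod3_ex1 (v' i) (v' j)
        (∑ l ∈ (univ.erase i).erase j, v' l) hvi
      obtain ⟨hx0, hf0⟩ := hbig i j hj.symm a 1
      have h0 : u * fmk k S (fun l => if l = i then a else if l = j then 1 else 1)
          + ∑ l, v l * (if l = i then a else if l = j then 1 else 1) = 0 := by
        rw [hf0, mul_zero, zero_add, Finset.sum_eq_zero]
        intro l _
        rw [hv l, zero_mul]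
      have hc := H2' _ hx0 h0
      rw [hf0, mul_zero, zero_add, sum_if_two v' hj.symm a 1] at hc
      exact ha hc
    have hu : u ≠ 0 := by
      obtain ⟨x₀, hx₀, hc⟩ := H1
      intro h
      apply hc
      rw [h, zero_mul, zero_add, Finset.sum_eq_zero]
      intro l _
      rw [hv l, zero_mul]
    obtain ⟨α, hα⟩ := zmod3_mulz u u' hu
    refine ⟨α, fun x hx => ?_⟩
    rw [Finset.sum_eq_zero (fun l _ => by rw [hv' l, zero_mul]),
      Finset.sum_eq_zero (fun l _ => by rw [hv l, zero_mul])]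
    exact hα _
  · push_neg at hv
    obtain ⟨i0, hi0⟩ := hv
    -- Step 1: v' is proportional to v
    have hstep1 : ∃ β : ZMod 3, ∀ l, v' l = β * v l := by
      by_cases hmin : ∀ a b : Fin m, v a * v' b = v b * v' a
      · obtain ⟨β, hβ'⟩ := zmod3_key (v i0) (v' i0) hi0
        exact ⟨β, fun l => hβ' (v l) (v' l) (hmin i0 l)⟩
      · exfalso
        push_neg at hmin
        obtain ⟨i, j, hne⟩ := hmin
        have hij : i ≠ j := by rintro rfl; exact hne rfl
        have hD : v i * v' j - v j * v' i ≠ 0 := sub_ne_zero.2 hne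
        obtain ⟨a, b, hab1, hab2⟩ := zmod3_cramer (v i) (v j) (v' i) (v' j)
          (∑ l ∈ (univ.erase i).erase j, v l) (∑ l ∈ (univ.erase i).erase j, v' l) hD
        obtain ⟨hx0, hf0⟩ := hbig i j hij a b
        have h0 : u * fmk k S (fun l => if l = i then a else if l = j then b else 1)
            + ∑ l, v l * (if l = i then a else if l = j then b else 1) = 0 := by
          rw [hf0, mul_zero, zero_add, sum_if_two v hij a b]
          exact hab1
        have hc := H2' _ hx0 h0
        rw [hf0, mul_zero, zero_add, sum_if_two v' hij a b, hab2] at hc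
        exact one_ne_zero hc
    obtain ⟨β, hβ⟩ := hstep1
    have hid : ∀ x : Fin m → ZMod 3, u' * fmk k S x + ∑ l, v' l * x l
        = β * (u * fmk k S x + ∑ l, v l * x l) + (u' - β * u) * fmk k S x := by
      intro x
      have hs : ∑ l, v' l * x l = β * ∑ l, v l * x l := by
        rw [Finset.mul_sum]
        exact Finset.sum_congr rfl fun l _ => by rw [hβ l]; ring
      rw [hs]; ring
    by_cases hγ : u' - β * u = 0
    · exact ⟨β, fun x hx => by rw [hid x, hγ, zero_mul, add_zero]⟩
    · exfalso
      suffices hsuff : ∃ x : Fin m → ZMod 3, x ≠ 0 ∧ fmk k S x ≠ 0 ∧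
          u * fmk k S x + ∑ l, v l * x l = 0 by
        obtain ⟨x, hx, hf, h0⟩ := hsuff
        have h2 := H2' x hx h0
        rw [hid x, h0, mul_zero, zero_add] at h2
        exact hf ((mul_eq_zero.1 h2).resolve_left hγ)
      by_cases hu : u = 0
      · by_cases hz : ∃ j1 j2 : Fin m, j1 ≠ j2 ∧ v j1 = 0 ∧ v j2 = 0
        · obtain ⟨j1, j2, hj12, h1, h2⟩ := hz
          have hn := norm_two_pt hj12 (one_ne_zero (α := ZMod 3)) one_ne_zero
          refine ⟨fun l => if l = j1 then 1 else if l = j2 then 1 else 0, ?_, ?_, ?_⟩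
          · intro h; rw [h, hammingNorm_zero] at hn; omega
          · exact fmk_ne_zero (by rw [hn]; exact Finset.mem_Icc.2 ⟨by omega, by omega⟩)
          · rw [hu, zero_mul, zero_add, sum_pts v hj12 1 1, h1, h2]; ring
        · push_neg at hz
          have h3 : (3 : ℕ) ≤ m := by omega
          set e0 : Fin m := ⟨0, by omega⟩
          set e1 : Fin m := ⟨1, by omega⟩
          set e2 : Fin m := ⟨2, by omega⟩
          have h01 : e0 ≠ e1 := by simp [e0, e1, Fin.ext_iff]
          have h02 : e0 ≠ e2 := by simp [e0, e2, Fin.ext_iff]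
          have h12 : e1 ≠ e2 := by simp [e1, e2, Fin.ext_iff]
          obtain ⟨p, q, hpq, hp, hq⟩ : ∃ p q : Fin m, p ≠ q ∧ v p ≠ 0 ∧ v q ≠ 0 := by
            by_cases hz0 : v e0 = 0
            · exact ⟨e1, e2, h12, hz e0 e1 h01 hz0, hz e0 e2 h02 hz0⟩
            · by_cases hz1 : v e1 = 0
              · exact ⟨e0, e2, h02, hz0, hz e1 e2 h12 hz1⟩
              · exact ⟨e0, e1, h01, hz0, hz1⟩
          obtain ⟨b, hb0, hbeq⟩ := zmod3_ex2 (v p) (v q) hp hq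
          have hn := norm_two_pt hpq (one_ne_zero (α := ZMod 3)) hb0
          refine ⟨fun l => if l = p then 1 else if l = q then b else 0, ?_, ?_, ?_⟩
          · intro h; rw [h, hammingNorm_zero] at hn; omega
          · exact fmk_ne_zero (by rw [hn]; exact Finset.mem_Icc.2 ⟨by omega, by omega⟩)
          · rw [hu, zero_mul, zero_add, sum_pts v hpq 1 b]; exact hbeq
      · -- u ≠ 0 : weight one vector at i0
        set t : ZMod 3 := if (1:ℕ) ∈ S then (-1 : ZMod 3) else 1 with htdef
        have ht : t ≠ 0 := by rw [htdef]; split <;> decide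
        obtain ⟨a, ha0, haeq⟩ := zmod3_ex3 u (v i0) t hu hi0 ht
        have hn := norm_one_pt (i := i0) ha0
        have hfmk : fmk k S (fun l => if l = i0 then a else 0) = t := by
          unfold fmk
          rw [hn, htdef]
          by_cases h1S : (1:ℕ) ∈ S
          · rw [if_pos h1S, if_pos h1S]
          · rw [if_neg h1S, if_neg h1S,
              if_pos (Finset.mem_Icc.2 ⟨le_refl 1, by omega⟩)]
        refine ⟨fun l => if l = i0 then a else 0, ?_, ?_, ?_⟩
        · intro h; rw [h, hammingNorm_zero] at hn; omega
        · rw [hfmk]; exact ht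
        · rw [hfmk, sum_one_pt v i0 a]; exact haeq
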